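/- arXiv:2511.02073 — 2 statements merged into one kernel-verified Lean document; each statement's English description precedes it below -/
import Mathlib

section
/- Let A, B be symmetric n×n real matrices, Q a symmetric n×n matrix, and u a unit vector in R^n, and suppose [[A,0],[0,-B]] ≤ [[Q,-Q],[-Q,Q]] in the Loewner order. If moreover Q = P + 2ε·P² for a symmetric matrix P with ⟨Pu, u⟩ = φ'' and ε ≥ 0, then Trace(A - B) ≤ 2φ'' + 4ε·‖Pu‖². -/
/-!
Testing the block inequality on vectors `(x, x)` gives `A ≤ B`, so `Trace(A - B)` is at most the
quadratic form `⟨(A - B) u, u⟩`, since the trace of a positive semidefinite matrix dominates its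
quadratic form on unit vectors. Testing on `(u, 0)` and `(0, u)` bounds `⟨A u, u⟩` and
`-⟨B u, u⟩` by `⟨Q u, u⟩`, and `⟨Q u, u⟩ = φ'' + 2ε‖P u‖²` because `P` is symmetric.
-/

open Matrix

namespace Matrix

variable {ι κ R : Type*} [Ring R] [PartialOrder R] [StarRing R]

lemma PosSemidef.toBlocks₁₁ {M : Matrix (ι ⊕ κ) (ι ⊕ κ) R} (hM : M.PosSemidef) :
    M.toBlocks₁₁.PosSemidef :=
  hM.submatrix Sum.inl

lemma PosSemidef.toBlocks₂₂ {M : Matrix (ι ⊕ κ) (ι ⊕ κ) R} (hM : M.PosSemidef) :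
    M.toBlocks₂₂.PosSemidef :=
  hM.submatrix Sum.inr

variable [Fintype ι]

lemma PosSemidef.add_add_add_of_fromBlocks {A B C D : Matrix ι ι R}
    (h : (fromBlocks A B C D).PosSemidef) : (A + B + C + D).PosSemidef := by
  classical
  convert h.conjTranspose_mul_mul_same (fromRows (1 : Matrix ι ι R) 1) using 1
  simp [conjTranspose_fromRows_eq_fromCols_conjTranspose, fromCols_mul_fromBlocks,
    fromCols_mul_fromRows]
  abel

lemma PosSemidef.dotProduct_mulVec_le_trace {N : Matrix ι ι ℝ} (hN : N.PosSemidef)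
    {u : ι → ℝ} (hu : u ⬝ᵥ u = 1) : u ⬝ᵥ N *ᵥ u ≤ N.trace := by
  classical
  obtain ⟨C, rfl⟩ : ∃ C : Matrix ι ι ℝ, N = Cᴴ * C := by
    open scoped MatrixOrder in exact CStarAlgebra.nonneg_iff_eq_star_mul_self.mp hN.nonneg
  rw [conjTranspose_eq_transpose_of_trivial]
  have h_form : u ⬝ᵥ (Cᵀ * C) *ᵥ u = ∑ i, (∑ j, C i j * u j) ^ 2 := by
    rw [← mulVec_mulVec, dotProduct_mulVec, vecMul_transpose]
    simp [dotProduct, mulVec, sq]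
  have h_trace : (Cᵀ * C).trace = ∑ i, ∑ j, C i j ^ 2 := by
    rw [trace, Finset.sum_comm]
    simp [diag, mul_apply, sq]
  have hu' : ∑ j, u j ^ 2 = 1 := by simpa [dotProduct, sq] using hu
  rw [h_form, h_trace]
  gcongr with i
  simpa [hu'] using Finset.sum_mul_sq_le_sq_mul_sq Finset.univ (C i) u

lemma IsSymm.dotProduct_sq_mulVec [DecidableEq ι] {P : Matrix ι ι ℝ} (hP : P.IsSymm)
    (u : ι → ℝ) : u ⬝ᵥ (P ^ 2) *ᵥ u = P *ᵥ u ⬝ᵥ P *ᵥ u := by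
  rw [sq, ← mulVec_mulVec, dotProduct_mulVec, ← mulVec_transpose, hP]

end Matrix

theorem stmt_3_general (n : ℕ) (A B P Q : Matrix (Fin n) (Fin n) ℝ)
    (hP : P.IsSymm)
    (u : Fin n → ℝ) (hu : u ⬝ᵥ u = 1)
    (h : (Matrix.fromBlocks Q (-Q) (-Q) Q - Matrix.fromBlocks A 0 0 (-B)).PosSemidef)
    (ε φ'' : ℝ)
    (hQ : Q = P + (2 * ε) • P ^ 2)
    (hφ : P.mulVec u ⬝ᵥ u = φ'') :
    (A - B).trace ≤ 2 * φ'' + 4 * ε * (P.mulVec u ⬝ᵥ P.mulVec u) := by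
  rw [show fromBlocks Q (-Q) (-Q) Q - fromBlocks A 0 0 (-B)
      = fromBlocks (Q - A) (-Q) (-Q) (Q + B) by
    simp [sub_eq_add_neg, fromBlocks_neg, fromBlocks_add]] at h
  have hAB : (B - A).PosSemidef := by
    convert h.add_add_add_of_fromBlocks using 1
    abel
  have hQA : 0 ≤ u ⬝ᵥ (Q - A) *ᵥ u := by simpa using h.toBlocks₁₁.dotProduct_mulVec_nonneg u
  have hQB : 0 ≤ u ⬝ᵥ (Q + B) *ᵥ u := by simpa using h.toBlocks₂₂.dotProduct_mulVec_nonneg u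
  have hQu : u ⬝ᵥ Q *ᵥ u = φ'' + 2 * ε * (P *ᵥ u ⬝ᵥ P *ᵥ u) := by
    rw [hQ, add_mulVec, dotProduct_add, smul_mulVec, dotProduct_smul, hP.dotProduct_sq_mulVec,
      dotProduct_comm, hφ, smul_eq_mul]
  calc (A - B).trace = -(B - A).trace := by rw [← trace_neg, neg_sub]
    _ ≤ -(u ⬝ᵥ (B - A) *ᵥ u) := neg_le_neg (hAB.dotProduct_mulVec_le_trace hu)
    _ = 2 * (u ⬝ᵥ Q *ᵥ u) - u ⬝ᵥ (Q - A) *ᵥ u - u ⬝ᵥ (Q + B) *ᵥ u := by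
      simp only [sub_mulVec, add_mulVec, dotProduct_sub, dotProduct_add]
      ring
    _ ≤ 2 * (u ⬝ᵥ Q *ᵥ u) := by linarith
    _ = 2 * φ'' + 4 * ε * (P *ᵥ u ⬝ᵥ P *ᵥ u) := by rw [hQu]; ring

/-- If `[[A,0],[0,-B]] ≤ [[Q,-Q],[-Q,Q]]` with `Q = P + 2ε P²`, `P` symmetric,
`⟨P u, u⟩ = φ''` for a unit vector `u` and `ε ≥ 0`, then
`Trace(A - B) ≤ 2 φ'' + 4 ε ‖P u‖²`. -/
theorem stmt_3 (n : ℕ) (A B P Q : Matrix (Fin n) (Fin n) ℝ)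
    (hA : A.IsSymm) (hB : B.IsSymm) (hP : P.IsSymm)
    (u : Fin n → ℝ) (hu : u ⬝ᵥ u = 1)
    (h : (Matrix.fromBlocks Q (-Q) (-Q) Q - Matrix.fromBlocks A 0 0 (-B)).PosSemidef)
    (ε φ'' : ℝ) (hε : 0 ≤ ε)
    (hQ : Q = P + (2 * ε) • P ^ 2)
    (hφ : P.mulVec u ⬝ᵥ u = φ'') :
    (A - B).trace ≤ 2 * φ'' + 4 * ε * (P.mulVec u ⬝ᵥ P.mulVec u) :=
  stmt_3_general n A B P Q hP u hu h ε φ'' hQ hφ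
end

section
/- Let F(x, z, p, A) = -Trace(𝒜(p)·A) + ⟨b(x), p⟩ + c·z where 𝒜(p) is symmetric with 𝒜(p) ≥ λI for all p (λ > 0), ‖b(x)‖ ≤ B for all x, and c > 0. Suppose x, y ∈ R^n with ‖x-y‖ = 2s > 0, z, w ∈ R with w - z = 2φ(s) ≥ 0, u = (x-y)/‖x-y‖, p = φ'(s)·u, and A, B' ∈ S(n) satisfy Trace(A - B') ≤ 2φ''(s) + εq₀ for some q₀ ≥ 0 and A ≤ B'. Then F(y, z, p, B') - F(x, w, p, A) ≤ -2(-λφ''(s) - B|φ'(s)| + cφ(s)) + ελq₀. -/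
/-!
The second-order terms are controlled by ellipticity: `Trace(𝒜(p) (A - B')) ≤ λ Trace(A - B')`,
because `Trace(P Q) ≥ 0` for the positive semidefinite matrices `P = 𝒜(p) - λI` and
`Q = B' - A`. Each drift term is at most `B |φ'|` by Cauchy–Schwarz, as `‖p‖ ≤ |φ'|`, and the
zeroth-order terms contribute exactly `c (z - w) = -2cφ`.
-/

open Matrix

open scoped MatrixOrder ComplexOrder in
theorem Matrix.PosSemidef.trace_mul_nonneg {𝕜 ι : Type*} [RCLike 𝕜] [Fintype ι] [DecidableEq ι]
    {P Q : Matrix ι ι 𝕜} (hP : P.PosSemidef) (hQ : Q.PosSemidef) : 0 ≤ (P * Q).trace := by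
  obtain ⟨R, rfl⟩ := CStarAlgebra.nonneg_iff_eq_star_mul_self.mp hQ.nonneg
  rw [star_eq_conjTranspose, ← mul_assoc, trace_mul_comm, ← mul_assoc]
  exact (hP.mul_mul_conjTranspose_same R).trace_nonneg

theorem Matrix.trace_mul_sub_trace_mul_le {ι : Type*} [Fintype ι] [DecidableEq ι]
    {M A B : Matrix ι ι ℝ} {lam : ℝ} (hM : (M - lam • 1).PosSemidef) (hAB : (B - A).PosSemidef) :
    (M * A).trace - (M * B).trace ≤ lam * (A - B).trace := by
  have hsplit : (M * A).trace - (M * B).trace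
      = -((M - lam • 1) * (B - A)).trace + lam * (A - B).trace := by
    simp only [sub_mul, mul_sub, smul_mul, one_mul, trace_sub, trace_smul, smul_eq_mul]
    ring
  linarith [hM.trace_mul_nonneg hAB]

theorem abs_inner_smul_inv_norm_smul_le {E : Type*} [NormedAddCommGroup E]
    [InnerProductSpace ℝ E] {b : E} {B : ℝ} (hb : ‖b‖ ≤ B) (t : ℝ) (v : E) :
    |inner ℝ b (t • ‖v‖⁻¹ • v)| ≤ B * |t| := by
  have hunit : ‖‖v‖⁻¹ • v‖ ≤ 1 := by
    simpa using inv_norm_smul_mem_unitClosedBall v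
  calc |inner ℝ b (t • ‖v‖⁻¹ • v)| ≤ ‖b‖ * ‖t • ‖v‖⁻¹ • v‖ := abs_real_inner_le_norm _ _
    _ ≤ B * (|t| * 1) := by
      rw [norm_smul, Real.norm_eq_abs]
      gcongr
      exact (norm_nonneg b).trans hb
    _ = B * |t| := by rw [mul_one]

theorem stmt_15_general (n : ℕ)
    (𝒜 : EuclideanSpace ℝ (Fin n) → Matrix (Fin n) (Fin n) ℝ)
    (lam : ℝ) (hlam : 0 < lam)
    (h𝒜 : ∀ p, ((𝒜 p) - lam • (1 : Matrix (Fin n) (Fin n) ℝ)).PosSemidef)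
    (b : EuclideanSpace ℝ (Fin n) → EuclideanSpace ℝ (Fin n))
    (Bb : ℝ) (hb : ∀ x, ‖b x‖ ≤ Bb)
    (c : ℝ)
    (F : EuclideanSpace ℝ (Fin n) → ℝ → EuclideanSpace ℝ (Fin n) →
      Matrix (Fin n) (Fin n) ℝ → ℝ)
    (hF : ∀ x z p A, F x z p A = -((𝒜 p * A).trace) + (inner ℝ (b x) p : ℝ) + c * z)
    (x y : EuclideanSpace ℝ (Fin n))
    (z w φs φ' φ'' : ℝ) (hwz : w - z = 2 * φs)
    (uv p : EuclideanSpace ℝ (Fin n))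
    (hu : uv = ‖x - y‖⁻¹ • (x - y)) (hp : p = φ' • uv)
    (A B' : Matrix (Fin n) (Fin n) ℝ)
    (hord : (B' - A).PosSemidef)
    (ε q₀ : ℝ)
    (htr : (A - B').trace ≤ 2 * φ'' + ε * q₀) :
    F y z p B' - F x w p A ≤ -2 * (-lam * φ'' - Bb * |φ'| + c * φs) + ε * lam * q₀ := by
  have hdrift (x' : EuclideanSpace ℝ (Fin n)) : |inner ℝ (b x') p| ≤ Bb * |φ'| := by
    rw [hp, hu]
    exact abs_inner_smul_inv_norm_smul_le (hb x') φ' (x - y)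
  have hdiffusion := trace_mul_sub_trace_mul_le (h𝒜 p) hord
  have hscaled := mul_le_mul_of_nonneg_left htr hlam.le
  have hzero_order : c * (w - z) = c * (2 * φs) := by rw [hwz]
  rw [hF, hF]
  linarith [abs_le.mp (hdrift x), abs_le.mp (hdrift y)]

/-- Verification of the structure condition for
`F(x,z,p,A) = -Trace(𝒜(p) A) + ⟨b(x), p⟩ + c z` with `𝒜(p) ≥ λ I`, `‖b‖ ≤ B`,
`c > 0`: if `A ≤ B'` and `Trace(A - B') ≤ 2φ'' + ε q₀`, then with `p = φ' u`,
`u = (x-y)/‖x-y‖`, `w - z = 2φ(s) ≥ 0`,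
`F(y,z,p,B') - F(x,w,p,A) ≤ -2(-λφ'' - B|φ'| + cφ) + ε λ q₀`. -/
theorem stmt_15 (n : ℕ)
    (𝒜 : EuclideanSpace ℝ (Fin n) → Matrix (Fin n) (Fin n) ℝ)
    (h𝒜sym : ∀ p, (𝒜 p).IsSymm)
    (lam : ℝ) (hlam : 0 < lam)
    (h𝒜 : ∀ p, ((𝒜 p) - lam • (1 : Matrix (Fin n) (Fin n) ℝ)).PosSemidef)
    (b : EuclideanSpace ℝ (Fin n) → EuclideanSpace ℝ (Fin n))
    (Bb : ℝ) (hb : ∀ x, ‖b x‖ ≤ Bb)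
    (c : ℝ) (hc : 0 < c)
    (F : EuclideanSpace ℝ (Fin n) → ℝ → EuclideanSpace ℝ (Fin n) →
      Matrix (Fin n) (Fin n) ℝ → ℝ)
    (hF : ∀ x z p A, F x z p A = -((𝒜 p * A).trace) + (inner ℝ (b x) p : ℝ) + c * z)
    (x y : EuclideanSpace ℝ (Fin n)) (s : ℝ) (hs : 0 < s) (hxy : ‖x - y‖ = 2 * s)
    (z w φs φ' φ'' : ℝ) (hwz : w - z = 2 * φs) (hφs : 2 * φs ≥ 0)
    (uv p : EuclideanSpace ℝ (Fin n))
    (hu : uv = ‖x - y‖⁻¹ • (x - y)) (hp : p = φ' • uv)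
    (A B' : Matrix (Fin n) (Fin n) ℝ) (hA : A.IsSymm) (hB' : B'.IsSymm)
    (hord : (B' - A).PosSemidef)
    (ε q₀ : ℝ) (hε : 0 ≤ ε) (hq₀ : 0 ≤ q₀)
    (htr : (A - B').trace ≤ 2 * φ'' + ε * q₀) :
    F y z p B' - F x w p A ≤ -2 * (-lam * φ'' - Bb * |φ'| + c * φs) + ε * lam * q₀ :=
  stmt_15_general n 𝒜 lam hlam h𝒜 b Bb hb c F hF x y z w φs φ' φ'' hwz uv p hu hp A B' hord ε q₀ htr
end
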